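/- Let (X, d) be a complete metric space and T : X → X a mapping. Suppose there exists r ∈ [0, 1) such that for all x, y ∈ X: f(r)·d(x, Tx) ≤ d(x, y) implies d(Tx, Ty) ≤ r·d(x, y). Then T is a Picard operator: there exists a unique point p ∈ X with Tp = p, and for every x ∈ X the sequence of iterates Tⁿx converges to p. -/
import Mathlib


/-- The function f from Suzuki's theorem: f(r) = 1 on [0, (√5−1)/2],
    (1−r)/r² on ((√5−1)/2, 1/√2), and 1/(1+r) on [1/√2, 1). -/
noncomputable def suzukiF (r : ℝ) : ℝ :=
  if r ≤ (Real.sqrt 5 - 1) / 2 then 1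
  else if r < 1 / Real.sqrt 2 then (1 - r) / r ^ 2
  else 1 / (1 + r)

lemma suzuki_nonneg {r : ℝ} (hr0 : 0 ≤ r) (hr1 : r < 1) : 0 ≤ suzukiF r := by
  unfold suzukiF
  split_ifs with h1 h2
  · norm_num
  · have h5 : Real.sqrt 5 ^ 2 = 5 := Real.sq_sqrt (by norm_num)
    have h5' : 0 ≤ Real.sqrt 5 := Real.sqrt_nonneg 5
    push_neg at h1
    have hrpos : 0 < r := by nlinarith
    exact div_nonneg (by linarith) (by positivity)
  · exact div_nonneg one_pos.le (by linarith)

lemma suzuki_le_one {r : ℝ} (hr0 : 0 ≤ r) (hr1 : r < 1) : suzukiF r ≤ 1 := by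
  unfold suzukiF
  split_ifs with h1 h2
  · exact le_refl 1
  · have h5 : Real.sqrt 5 ^ 2 = 5 := Real.sq_sqrt (by norm_num)
    have h5' : 0 ≤ Real.sqrt 5 := Real.sqrt_nonneg 5
    push_neg at h1
    have hrpos : 0 < r := by nlinarith
    rw [div_le_one (by positivity)]
    nlinarith
  · rw [div_le_one (by linarith)]; linarith

lemma suzuki_caseA {r : ℝ} (hr0 : 0 ≤ r) (hr1 : r < 1) (h : r < 1 / Real.sqrt 2) :
    suzukiF r * r ^ 2 ≤ 1 - r := by
  unfold suzukiF
  split_ifs with h1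
  · have h5 : Real.sqrt 5 ^ 2 = 5 := Real.sq_sqrt (by norm_num)
    have h5' : 0 ≤ Real.sqrt 5 := Real.sqrt_nonneg 5
    nlinarith
  · have h5 : Real.sqrt 5 ^ 2 = 5 := Real.sq_sqrt (by norm_num)
    have h5' : 0 ≤ Real.sqrt 5 := Real.sqrt_nonneg 5
    push_neg at h1
    have hrpos : 0 < r := by nlinarith
    rw [div_mul_cancel₀ _ (by positivity : r ^ 2 ≠ 0)]

lemma sq_lt_half {r : ℝ} (hr0 : 0 ≤ r) (h : r < 1 / Real.sqrt 2) : r ^ 2 < 1 / 2 := by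
  have h2 : Real.sqrt 2 ^ 2 = 2 := Real.sq_sqrt (by norm_num)
  have h2' : 0 < Real.sqrt 2 := Real.sqrt_pos.mpr (by norm_num)
  rw [lt_div_iff₀ h2'] at h
  nlinarith

lemma suzuki_caseB {r : ℝ} (hr0 : 0 ≤ r) (hr1 : r < 1) (h : 1 / Real.sqrt 2 ≤ r) :
    suzukiF r * (1 + r) = 1 := by
  unfold suzukiF
  have h2 : Real.sqrt 2 ^ 2 = 2 := Real.sq_sqrt (by norm_num)
  have h2' : 0 < Real.sqrt 2 := Real.sqrt_pos.mpr (by norm_num)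
  have h5 : Real.sqrt 5 ^ 2 = 5 := Real.sq_sqrt (by norm_num)
  have h5' : 0 ≤ Real.sqrt 5 := Real.sqrt_nonneg 5
  have hphi : (Real.sqrt 5 - 1) / 2 < 1 / Real.sqrt 2 := by
    rw [div_lt_div_iff₀ (by norm_num) h2']
    have hs2 : 1 < Real.sqrt 2 := by nlinarith
    nlinarith [sq_nonneg (Real.sqrt 5 * Real.sqrt 2 - 2 - Real.sqrt 2), mul_pos (by nlinarith : (0:ℝ) < Real.sqrt 5) h2']
  split_ifs with h1 h2a
  · linarith
  · linarith
  · rw [one_div_mul_cancel (by linarith : (1:ℝ) + r ≠ 0)]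

open Filter

section Suzuki

variable {X : Type*} [MetricSpace X] [CompleteSpace X]
variable {T : X → X} {r : ℝ}

lemma iter_dist (hr0 : 0 ≤ r) (hr1 : r < 1)
    (H : ∀ x y : X, suzukiF r * dist x (T x) ≤ dist x y → dist (T x) (T y) ≤ r * dist x y)
    (x : X) : ∀ n : ℕ, dist (T^[n] x) (T^[n+1] x) ≤ r ^ n * dist x (T x) := by
  intro n
  induction n with
  | zero => simp
  | succ n ih =>
    have cond : suzukiF r * dist (T^[n] x) (T (T^[n] x)) ≤ dist (T^[n] x) (T^[n+1] x) := by
      rw [← Function.iterate_succ_apply' T n x]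
      exact mul_le_of_le_one_left dist_nonneg (suzuki_le_one hr0 hr1)
    have step := H (T^[n] x) (T^[n+1] x) cond
    rw [← Function.iterate_succ_apply' T n x, ← Function.iterate_succ_apply' T (n+1) x] at step
    calc dist (T^[n+1] x) (T^[n+1+1] x) ≤ r * dist (T^[n] x) (T^[n+1] x) := step
      _ ≤ r * (r ^ n * dist x (T x)) := mul_le_mul_of_nonneg_left ih hr0
      _ = r ^ (n+1) * dist x (T x) := by ring

lemma suzuki_fix (hr0 : 0 ≤ r) (hr1 : r < 1)
    (H : ∀ x y : X, suzukiF r * dist x (T x) ≤ dist x y → dist (T x) (T y) ≤ r * dist x y)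
    (u : X) : ∃ z : X, T z = z ∧ Tendsto (fun n => T^[n] u) atTop (nhds z) := by
  have hθ0 := suzuki_nonneg hr0 hr1
  have hθ1 := suzuki_le_one hr0 hr1
  -- Cauchy and limit
  have hc : CauchySeq (fun n => T^[n] u) :=
    cauchySeq_of_le_geometric r (dist u (T u)) hr1
      (fun n => by rw [mul_comm]; exact iter_dist hr0 hr1 H u n)
  obtain ⟨z, hz⟩ := cauchySeq_tendsto_of_complete hc
  refine ⟨z, ?_, hz⟩
  -- key contraction to the limit
  have key : ∀ x : X, x ≠ z → dist z (T x) ≤ r * dist z x := by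
    intro x hx
    have hD : 0 < dist x z := dist_pos.mpr hx
    obtain ⟨N, hN⟩ := Metric.tendsto_atTop.mp hz (dist x z / 3) (by positivity)
    have hev : ∀ n ≥ N, dist (T^[n+1] u) (T x) ≤ r * dist (T^[n] u) x := by
      intro n hn
      have h1 := hN n hn
      have h2 := hN (n+1) (le_trans hn (Nat.le_succ n))
      have cond : suzukiF r * dist (T^[n] u) (T (T^[n] u)) ≤ dist (T^[n] u) x := by
        rw [← Function.iterate_succ_apply' T n u]
        have b1 := dist_triangle (T^[n] u) z (T^[n+1] u)
        have b2 := dist_triangle x (T^[n] u) z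
        have hmul : suzukiF r * dist (T^[n] u) (T^[n+1] u) ≤ dist (T^[n] u) (T^[n+1] u) :=
          mul_le_of_le_one_left dist_nonneg hθ1
        have e1 : dist z (T^[n+1] u) = dist (T^[n+1] u) z := dist_comm _ _
        have e2 : dist (T^[n] u) x = dist x (T^[n] u) := dist_comm _ _
        linarith
      have := H (T^[n] u) x cond
      rwa [Function.iterate_succ_apply' T n u]
    have l1 : Tendsto (fun n => dist (T^[n+1] u) (T x)) atTop (nhds (dist z (T x))) :=
      ((hz.comp (tendsto_add_atTop_nat 1)).dist tendsto_const_nhds)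
    have l2 : Tendsto (fun n => r * dist (T^[n] u) x) atTop (nhds (r * dist z x)) :=
      (hz.dist tendsto_const_nhds).const_mul r
    exact le_of_tendsto_of_tendsto l1 l2 (eventually_atTop.mpr ⟨N, hev⟩)
  -- suppose z is not fixed
  by_contra hfix
  have ha : 0 < dist z (T z) := dist_pos.mpr (fun h => hfix h.symm)
  -- z is not periodic
  have nonper : ∀ m : ℕ, T^[m+1] z ≠ z := by
    intro m hm
    have h1 := iter_dist hr0 hr1 H z (m+1)
    have e2 : T^[m+1+1] z = T z := by
      rw [Function.iterate_succ_apply' T (m+1) z, hm]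
    rw [hm, e2] at h1
    have hle : r ^ (m+1) ≤ r := by
      calc r ^ (m+1) ≤ r ^ 1 := pow_le_pow_of_le_one hr0 hr1.le (by omega)
        _ = r := pow_one r
    nlinarith [dist_nonneg (x := z) (y := T z)]
  -- orbit of z converges to z geometrically
  have orb : ∀ n : ℕ, dist (T^[n+1] z) z ≤ r ^ n * dist z (T z) := by
    intro n
    induction n with
    | zero => simp [dist_comm]
    | succ n ih =>
      have hk := key (T^[n+1] z) (nonper n)
      rw [← Function.iterate_succ_apply' T (n+1) z] at hk
      calc dist (T^[n+1+1] z) z = dist z (T^[n+1+1] z) := dist_comm _ _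
        _ ≤ r * dist z (T^[n+1] z) := hk
        _ = r * dist (T^[n+1] z) z := by rw [dist_comm]
        _ ≤ r * (r ^ n * dist z (T z)) := mul_le_mul_of_nonneg_left ih hr0
        _ = r ^ (n+1) * dist z (T z) := by ring
  rcases lt_or_ge r (1 / Real.sqrt 2) with hcase | hcase
  · -- Case A : r < 1/√2
    have hA := suzuki_caseA hr0 hr1 hcase
    have hhalf := sq_lt_half hr0 hcase
    have d1 : dist (T^[1] z) (T^[2] z) ≤ r ^ 1 * dist z (T z) := iter_dist hr0 hr1 H z 1
    have d2 : dist (T^[2] z) (T^[3] z) ≤ r ^ 2 * dist z (T z) := iter_dist hr0 hr1 H z 2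
    have o1 : dist (T^[2] z) z ≤ r ^ 1 * dist z (T z) := orb 1
    have o2 : dist (T^[3] z) z ≤ r ^ 2 * dist z (T z) := orb 2
    have lower : (1 - r) * dist z (T z) ≤ dist (T^[2] z) z := by
      have t := dist_triangle z (T^[2] z) (T z)
      have e : dist (T^[2] z) (T z) = dist (T^[1] z) (T^[2] z) := by
        rw [Function.iterate_one, dist_comm]
      have e2 : dist z (T^[2] z) = dist (T^[2] z) z := dist_comm _ _
      nlinarith
    have cond : suzukiF r * dist (T^[2] z) (T (T^[2] z)) ≤ dist (T^[2] z) z := by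
      rw [← Function.iterate_succ_apply' T 2 z]
      calc suzukiF r * dist (T^[2] z) (T^[3] z) ≤ suzukiF r * (r ^ 2 * dist z (T z)) :=
            mul_le_mul_of_nonneg_left d2 hθ0
        _ = (suzukiF r * r ^ 2) * dist z (T z) := by ring
        _ ≤ (1 - r) * dist z (T z) := mul_le_mul_of_nonneg_right hA dist_nonneg
        _ ≤ dist (T^[2] z) z := lower
    have happ := H (T^[2] z) z cond
    rw [← Function.iterate_succ_apply' T 2 z] at happ
    -- happ : dist (T^[3] z) (T z) ≤ r * dist (T^[2] z) z
    have t := dist_triangle z (T^[3] z) (T z)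
    have e3 : dist z (T^[3] z) = dist (T^[3] z) z := dist_comm _ _
    nlinarith
  · -- Case B : 1/√2 ≤ r
    have hB := suzuki_caseB hr0 hr1 hcase
    obtain ⟨n, hn⟩ : ∃ n : ℕ, r ^ n < 1 / 2 := exists_pow_lt_of_lt_one (by norm_num) hr1
    have keyk : ∃ k : ℕ, n ≤ k ∧ dist (T^[k+1+1] z) (T z) ≤ r * dist (T^[k+1] z) z := by
      by_cases hcnd : suzukiF r * dist (T^[n+1] z) (T^[n+2] z) ≤ dist (T^[n+1] z) z
      · refine ⟨n, le_refl n, ?_⟩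
        have := H (T^[n+1] z) z (by rwa [← Function.iterate_succ_apply' T (n+1) z])
        rwa [← Function.iterate_succ_apply' T (n+1) z] at this
      · push_neg at hcnd
        refine ⟨n+1, Nat.le_succ n, ?_⟩
        have cond : suzukiF r * dist (T^[n+2] z) (T (T^[n+2] z)) ≤ dist (T^[n+2] z) z := by
          have e1 : dist (T^[n+2] z) (T (T^[n+2] z)) ≤ r * dist (T^[n+1] z) (T^[n+2] z) := by
            have cnd : suzukiF r * dist (T^[n+1] z) (T (T^[n+1] z)) ≤ dist (T^[n+1] z) (T^[n+2] z) := by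
              rw [← Function.iterate_succ_apply' T (n+1) z]
              exact mul_le_of_le_one_left dist_nonneg hθ1
            have := H (T^[n+1] z) (T^[n+2] z) cnd
            rwa [← Function.iterate_succ_apply' T (n+1) z] at this
          have h1 : suzukiF r * dist (T^[n+2] z) (T (T^[n+2] z)) ≤
              suzukiF r * (r * dist (T^[n+1] z) (T^[n+2] z)) :=
            mul_le_mul_of_nonneg_left e1 hθ0
          have h2 : suzukiF r * (r * dist (T^[n+1] z) (T^[n+2] z)) =
              dist (T^[n+1] z) (T^[n+2] z) - suzukiF r * dist (T^[n+1] z) (T^[n+2] z) := by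
            linear_combination dist (T^[n+1] z) (T^[n+2] z) * hB
          have h4 := dist_triangle (T^[n+1] z) z (T^[n+2] z)
          have e4 : dist z (T^[n+2] z) = dist (T^[n+2] z) z := dist_comm _ _
          linarith
        have := H (T^[n+2] z) z cond
        rwa [← Function.iterate_succ_apply' T (n+2) z] at this
    obtain ⟨k, hk1, hk2⟩ := keyk
    have o1 : dist (T^[k+1+1] z) z ≤ r ^ (k+1) * dist z (T z) := orb (k+1)
    have o0 : dist (T^[k+1] z) z ≤ r ^ k * dist z (T z) := orb k
    have p1 : r ^ (k+1) ≤ r ^ n := pow_le_pow_of_le_one hr0 hr1.le (by omega)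
    have p0 : r * r ^ k = r ^ (k+1) := by ring
    have t := dist_triangle z (T^[k+1+1] z) (T z)
    have e5 : dist z (T^[k+1+1] z) = dist (T^[k+1+1] z) z := dist_comm _ _
    have hstep : dist (T^[k+1+1] z) (T z) ≤ r ^ (k+1) * dist z (T z) := by
      calc dist (T^[k+1+1] z) (T z) ≤ r * dist (T^[k+1] z) z := hk2
        _ ≤ r * (r ^ k * dist z (T z)) := mul_le_mul_of_nonneg_left o0 hr0
        _ = r ^ (k+1) * dist z (T z) := by ring
    nlinarith

end Suzuki


theorem stmt_10 {X : Type*} [MetricSpace X] [CompleteSpace X] [Nonempty X]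
    (T : X → X) (r : ℝ) (hr0 : 0 ≤ r) (hr1 : r < 1)
    (H : ∀ x y : X, suzukiF r * dist x (T x) ≤ dist x y → dist (T x) (T y) ≤ r * dist x y) :
    ∃ p : X, T p = p ∧ (∀ q : X, T q = q → q = p) ∧
      ∀ x : X, Filter.Tendsto (fun n => T^[n] x) Filter.atTop (nhds p) := by
  obtain ⟨p, hp, -⟩ := suzuki_fix hr0 hr1 H (Classical.arbitrary X)
  have huniq : ∀ q : X, T q = q → q = p := by
    intro q hq
    have cond : suzukiF r * dist p (T p) ≤ dist p q := by
      rw [hp]; simp [dist_nonneg]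
    have := H p q cond
    rw [hp, hq] at this
    have hd : dist p q = 0 := by nlinarith [dist_nonneg (x := p) (y := q)]
    exact (dist_eq_zero.mp (by rwa [dist_comm] at hd))
  refine ⟨p, hp, huniq, fun x => ?_⟩
  obtain ⟨w, hw, hconv⟩ := suzuki_fix hr0 hr1 H x
  rwa [huniq w hw] at hconv
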